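/- The matrix Z(0) = I_s − (Σ_{p=1}^c n_{jp}(m_p − n_{ip})/α_p)_{i,j} has rank exactly s − 1. -/

import Mathlib

open Finset

/-- `m_p = |V(T_p)|`: the number of vertices of `K_{n_1,…,n_s}` lying in the `p`-th component
of a spanning forest, where `comp` sends each vertex to the index of its component. -/
noncomputable def mP {s c : ℕ} (n : Fin s → ℕ) (comp : (Σ i, Fin (n i)) → Fin c)
    (p : Fin c) : ℕ :=
  Nat.card {v : Σ i, Fin (n i) // comp v = p}

/-- `n_{ip} = |X_i ∩ V(T_p)|`: the number of vertices of the `i`-th partition class lying in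
the `p`-th component. -/
noncomputable def nIP {s c : ℕ} (n : Fin s → ℕ) (comp : (Σ i, Fin (n i)) → Fin c)
    (i : Fin s) (p : Fin c) : ℕ :=
  Nat.card {v : Σ i, Fin (n i) // v.1 = i ∧ comp v = p}

/-- `α_p = n·m_p − Σ_i n_i·n_{ip}` (as a real number). -/
noncomputable def alphaR {s c : ℕ} (n : Fin s → ℕ) (comp : (Σ i, Fin (n i)) → Fin c)
    (p : Fin c) : ℝ :=
  (∑ i, (n i : ℝ)) * (mP n comp p) - ∑ i, (n i : ℝ) * (nIP n comp i p)

/-- The matrix `Z(0) = I_s − (Σ_p n_{jp}(m_p − n_{ip})/α_p)_{i,j}`. -/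
noncomputable def Zzero {s c : ℕ} (n : Fin s → ℕ) (comp : (Σ i, Fin (n i)) → Fin c) :
    Matrix (Fin s) (Fin s) ℝ :=
  1 - Matrix.of fun i j =>
    ∑ p, (nIP n comp j p : ℝ) * ((mP n comp p : ℝ) - (nIP n comp i p : ℝ)) / alphaR n comp p

/-!
Write `β_{pq} = Σ_i n_{ip} (m_q − n_{iq})`, the number of pairs of vertices in `T_p × T_q` lying
in different classes. It is symmetric, its row sums are the `α_p`, and `x_i = Σ_p (m_p − n_{ip})`
is a kernel vector of `Z(0)`. Conversely, if `Z(0) v = 0` then `v_i = Σ_p (m_p − n_{ip}) z_p` with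
`z_p = (Σ_j n_{jp} v_j) / α_p`, and `α_p z_p = Σ_q β_{pq} z_q`: `z` is harmonic for the weighted
graph `β`, so `Σ_{p,q} β_{pq} (z_p − z_q)² = 0` and `z` is constant along edges of positive weight.
As all classes and all components are nonempty and there are at least two classes, this graph
is connected, so `v` is a multiple of `x`, and rank–nullity gives rank `s − 1`.
-/

theorem eq_of_sum_mul_sub_eq_zero {κ : Type*} [Fintype κ] {β : κ → κ → ℝ}
    (hsymm : ∀ p q, β p q = β q p) (hnonneg : ∀ p q, 0 ≤ β p q) {z : κ → ℝ}
    (hz : ∀ p, ∑ q, β p q * (z p - z q) = 0) {p q : κ} (hpq : 0 < β p q) : z p = z q := by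
  have hleft : ∑ p, ∑ q, β p q * (z p - z q) * z p = 0 := by
    simp [← Finset.sum_mul, hz]
  have hright : ∑ p, ∑ q, β p q * (z p - z q) * z q = 0 := by
    rw [Finset.sum_comm]
    calc ∑ q, ∑ p, β p q * (z p - z q) * z q = ∑ q, -((∑ p, β q p * (z q - z p)) * z q) := by
          simp only [Finset.sum_mul, ← Finset.sum_neg_distrib]
          refine Finset.sum_congr rfl fun q _ => Finset.sum_congr rfl fun p _ => ?_
          rw [hsymm p q]
          ring
      _ = 0 := by simp [hz]
  have hsum : ∑ p, ∑ q, β p q * (z p - z q) ^ 2 = 0 := by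
    calc ∑ p, ∑ q, β p q * (z p - z q) ^ 2
        = ∑ p, ∑ q, (β p q * (z p - z q) * z p - β p q * (z p - z q) * z q) := by
          simp only [sq]
          exact Finset.sum_congr rfl fun _ _ => Finset.sum_congr rfl fun _ _ => by ring
      _ = 0 := by simp only [Finset.sum_sub_distrib, hleft, hright, sub_zero]
  have hterm_nonneg : ∀ p q, 0 ≤ β p q * (z p - z q) ^ 2 :=
    fun p q => mul_nonneg (hnonneg p q) (sq_nonneg _)
  have hterm : β p q * (z p - z q) ^ 2 = 0 := by
    rw [Fintype.sum_eq_zero_iff_of_nonneg fun p => Finset.sum_nonneg fun q _ => hterm_nonneg p q]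
      at hsum
    exact congrFun ((Fintype.sum_eq_zero_iff_of_nonneg (hterm_nonneg p)).mp (congrFun hsum p)) q
  have hsq : (z p - z q) ^ 2 = 0 := (mul_eq_zero.mp hterm).resolve_left hpq.ne'
  exact sub_eq_zero.mp (pow_eq_zero_iff two_ne_zero |>.mp hsq)

theorem Matrix.rank_eq_card_sub_one_of_ker_eq_span {ι K : Type*} [Fintype ι] [Field K]
    {A : Matrix ι ι K} {x : ι → K} (hx : x ≠ 0)
    (hker : LinearMap.ker A.mulVecLin = Submodule.span K {x}) :
    A.rank = Fintype.card ι - 1 := by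
  have hrank := LinearMap.finrank_range_add_finrank_ker A.mulVecLin
  rw [hker, finrank_span_singleton hx, Module.finrank_fintype_fun_eq_card] at hrank
  rw [Matrix.rank]
  omega

open scoped Matrix

namespace CountMatrix

variable {ι κ : Type*} [Fintype ι] (a : ι → κ → ℝ)

def colSum (p : κ) : ℝ := ∑ i, a i p

def crossWeight (p q : κ) : ℝ := ∑ i, a i p * (colSum a q - a i q)

lemma crossWeight_eq (p q : κ) :
    crossWeight a p q = colSum a p * colSum a q - ∑ i, a i p * a i q := by
  simp only [crossWeight, mul_sub, Finset.sum_sub_distrib, colSum, Finset.sum_mul]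

lemma crossWeight_comm (p q : κ) : crossWeight a p q = crossWeight a q p := by
  simp only [crossWeight_eq, mul_comm]

section Nonneg

variable {a} (ha : ∀ i p, 0 ≤ a i p)
include ha

lemma le_colSum (i : ι) (p : κ) : a i p ≤ colSum a p :=
  Finset.single_le_sum (fun j _ => ha j p) (Finset.mem_univ i)

lemma add_le_colSum {i j : ι} (hij : i ≠ j) (p : κ) : a i p + a j p ≤ colSum a p := by
  classical
  calc a i p + a j p = ∑ k ∈ {i, j}, a k p := (Finset.sum_pair (f := (a · p)) hij).symm
    _ ≤ colSum a p :=
      Finset.sum_le_sum_of_subset_of_nonneg (Finset.subset_univ _) fun k _ _ => ha k p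

lemma mul_le_crossWeight {i j : ι} (hij : i ≠ j) (p q : κ) :
    a i p * a j q ≤ crossWeight a p q := by
  calc a i p * a j q ≤ a i p * (colSum a q - a i q) :=
        mul_le_mul_of_nonneg_left (by linarith [add_le_colSum ha hij q]) (ha i p)
    _ ≤ crossWeight a p q :=
        Finset.single_le_sum (f := fun k => a k p * (colSum a q - a k q))
          (fun k _ => mul_nonneg (ha k p) (sub_nonneg.mpr (le_colSum ha k q))) (Finset.mem_univ i)

lemma crossWeight_nonneg (p q : κ) : 0 ≤ crossWeight a p q :=
  Finset.sum_nonneg fun i _ => mul_nonneg (ha i p) (sub_nonneg.mpr (le_colSum ha i q))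

variable (hrow : ∀ i, ∃ p, 0 < a i p) (hcol : ∀ p, ∃ i, 0 < a i p) [Nontrivial ι]
include hrow hcol

lemma eq_of_eq_of_crossWeight_pos {z : κ → ℝ} (hz : ∀ p q, 0 < crossWeight a p q → z p = z q)
    (p q : κ) : z p = z q := by
  have hedge {i j : ι} {p q : κ} (hij : i ≠ j) (hp : 0 < a i p) (hq : 0 < a j q) : z p = z q :=
    hz p q ((mul_pos hp hq).trans_le (mul_le_crossWeight ha hij p q))
  obtain ⟨i, hi⟩ := hcol p
  obtain ⟨j, hj⟩ := hcol q
  by_cases hij : i = j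
  · subst hij
    obtain ⟨k, hk⟩ := exists_ne i
    obtain ⟨r, hr⟩ := hrow k
    exact (hedge hk.symm hi hr).trans (hedge hk hr hj)
  · exact hedge hij hi hj

end Nonneg

variable [Fintype κ]

def kernelVector (i : ι) : ℝ := ∑ p, (colSum a p - a i p)

lemma sum_crossWeight (p : κ) :
    ∑ q, crossWeight a p q =
      (∑ i, ∑ q, a i q) * colSum a p - ∑ i, (∑ q, a i q) * a i p := by
  simp only [crossWeight, colSum, mul_sub, Finset.sum_sub_distrib, ← Finset.sum_mul,
    ← Finset.mul_sum]
  rw [Finset.sum_comm (f := fun q i => a i p * a i q), Finset.sum_comm (f := fun i q => a i q),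
    mul_comm]
  simp only [Finset.mul_sum, mul_comm]

lemma sum_mul_sum_colSum_sub_mul (w : κ → ℝ) (p : κ) :
    ∑ j, a j p * ∑ q, (colSum a q - a j q) * w q = ∑ q, crossWeight a p q * w q := by
  simp only [crossWeight, Finset.mul_sum, Finset.sum_mul]
  rw [Finset.sum_comm]
  exact Finset.sum_congr rfl fun _ _ => Finset.sum_congr rfl fun _ _ => by ring

lemma sum_mul_kernelVector (p : κ) :
    ∑ j, a j p * kernelVector a j = ∑ q, crossWeight a p q := by
  simpa only [Pi.one_apply, mul_one, kernelVector] using sum_mul_sum_colSum_sub_mul a 1 p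

section Positive

variable {a} (ha : ∀ i p, 0 ≤ a i p) (hrow : ∀ i, ∃ p, 0 < a i p) [Nontrivial ι]
include ha hrow

lemma kernelVector_pos (i : ι) : 0 < kernelVector a i := by
  obtain ⟨k, hk⟩ := exists_ne i
  obtain ⟨r, hr⟩ := hrow k
  refine Finset.sum_pos' (fun p _ => sub_nonneg.mpr (le_colSum ha i p)) ⟨r, Finset.mem_univ r, ?_⟩
  linarith [add_le_colSum ha hk.symm r]

lemma kernelVector_ne_zero : kernelVector a ≠ 0 := fun h =>
  (kernelVector_pos ha hrow (Classical.arbitrary ι)).ne' (congrFun h _)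

variable (hcol : ∀ p, ∃ i, 0 < a i p)
include hcol

lemma sum_crossWeight_pos (p : κ) : 0 < ∑ q, crossWeight a p q := by
  obtain ⟨i, hi⟩ := hcol p
  obtain ⟨k, hk⟩ := exists_ne i
  obtain ⟨r, hr⟩ := hrow k
  refine Finset.sum_pos' (fun q _ => crossWeight_nonneg ha p q) ⟨r, Finset.mem_univ r, ?_⟩
  exact (mul_pos hi hr).trans_le (mul_le_crossWeight ha hk.symm p r)

end Positive

variable [DecidableEq ι]

noncomputable def zMatrix : Matrix ι ι ℝ :=
  1 - Matrix.of fun i j => ∑ p, a j p * (colSum a p - a i p) / ∑ q, crossWeight a p q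

lemma zMatrix_mulVec (v : ι → ℝ) (i : ι) :
    (zMatrix a *ᵥ v) i =
      v i - ∑ p, (colSum a p - a i p) * ((∑ j, a j p * v j) / ∑ q, crossWeight a p q) := by
  rw [zMatrix, Matrix.sub_mulVec, Matrix.one_mulVec, Pi.sub_apply, sub_right_inj]
  simp only [Matrix.mulVec, dotProduct, Matrix.of_apply, Finset.sum_mul]
  rw [Finset.sum_comm]
  refine Finset.sum_congr rfl fun p _ => ?_
  rw [Finset.sum_div, Finset.mul_sum]
  exact Finset.sum_congr rfl fun _ _ => by ring

lemma zMatrix_mulVec_kernelVector (hα : ∀ p, ∑ q, crossWeight a p q ≠ 0) :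
    zMatrix a *ᵥ kernelVector a = 0 := by
  funext i
  rw [zMatrix_mulVec, Pi.zero_apply]
  simp only [sum_mul_kernelVector, div_self (hα _), mul_one]
  exact sub_self _

variable {a} (ha : ∀ i p, 0 ≤ a i p) (hrow : ∀ i, ∃ p, 0 < a i p)
  (hcol : ∀ p, ∃ i, 0 < a i p) [Nontrivial ι]
include ha hrow hcol

lemma exists_eq_smul_kernelVector {v : ι → ℝ} (hv : zMatrix a *ᵥ v = 0) :
    ∃ t : ℝ, v = t • kernelVector a := by
  set z : κ → ℝ := fun p => (∑ j, a j p * v j) / ∑ q, crossWeight a p q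
  have hvz (i : ι) : v i = ∑ p, (colSum a p - a i p) * z p :=
    sub_eq_zero.mp (by rw [← zMatrix_mulVec, hv, Pi.zero_apply])
  have hharmonic (p : κ) : ∑ q, crossWeight a p q * (z p - z q) = 0 := by
    have hz : (∑ q, crossWeight a p q) * z p = ∑ q, crossWeight a p q * z q := by
      rw [← sum_mul_sum_colSum_sub_mul, mul_div_cancel₀ _ (sum_crossWeight_pos ha hrow hcol p).ne']
      simp only [← hvz]
    simp only [mul_sub, Finset.sum_sub_distrib, ← Finset.sum_mul, hz, sub_self]
  have hconst := eq_of_eq_of_crossWeight_pos ha hrow hcol fun p q hpq =>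
    eq_of_sum_mul_sub_eq_zero (crossWeight_comm a) (crossWeight_nonneg ha) hharmonic hpq
  obtain ⟨p₀, -⟩ := hrow (Classical.arbitrary ι)
  refine ⟨z p₀, funext fun i => ?_⟩
  simp only [hvz i, hconst _ p₀, ← Finset.sum_mul, Pi.smul_apply, smul_eq_mul, kernelVector,
    mul_comm]

lemma ker_zMatrix : LinearMap.ker (zMatrix a).mulVecLin = Submodule.span ℝ {kernelVector a} := by
  refine le_antisymm (fun v hv => ?_) ?_
  · obtain ⟨t, rfl⟩ := exists_eq_smul_kernelVector ha hrow hcol hv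
    exact Submodule.smul_mem _ t (Submodule.mem_span_singleton_self _)
  · rw [Submodule.span_singleton_le_iff_mem]
    exact zMatrix_mulVec_kernelVector a fun p => (sum_crossWeight_pos ha hrow hcol p).ne'

theorem rank_zMatrix : (zMatrix a).rank = Fintype.card ι - 1 :=
  Matrix.rank_eq_card_sub_one_of_ker_eq_span (kernelVector_ne_zero ha hrow)
    (ker_zMatrix ha hrow hcol)

end CountMatrix

section Counts

variable {s c : ℕ} (n : Fin s → ℕ) (comp : (Σ i, Fin (n i)) → Fin c)

lemma sum_nIP_eq_mP (p : Fin c) : ∑ i, nIP n comp i p = mP n comp p := by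
  simp only [nIP, mP, Nat.card_eq_fintype_card, Fintype.card_subtype]
  rw [Finset.card_eq_sum_card_fiberwise (f := Sigma.fst) (t := Finset.univ)
    fun _ _ => Finset.mem_univ _]
  simp only [Finset.filter_filter, and_comm]

lemma sum_nIP_eq (i : Fin s) : ∑ p, nIP n comp i p = n i := by
  simp only [nIP, Nat.card_eq_fintype_card, Fintype.card_subtype, ← Finset.filter_filter]
  rw [← Finset.card_eq_sum_card_fiberwise (f := comp) (t := Finset.univ)
      fun _ _ => Finset.mem_univ _,
    ← Fintype.card_subtype, Fintype.card_congr (Equiv.sigmaSubtype i), Fintype.card_fin]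

lemma nIP_fst_comp_pos (v : Σ i, Fin (n i)) : 0 < nIP n comp v.1 (comp v) :=
  Nat.card_pos_iff.mpr ⟨⟨⟨v, rfl, rfl⟩⟩, inferInstance⟩

lemma alphaR_eq_sum_crossWeight (p : Fin c) :
    alphaR n comp p = ∑ q, CountMatrix.crossWeight (fun i p => (nIP n comp i p : ℝ)) p q := by
  have hn (i : Fin s) : (n i : ℝ) = ∑ q, (nIP n comp i q : ℝ) := by
    exact_mod_cast (sum_nIP_eq n comp i).symm
  have hm (q : Fin c) : (mP n comp q : ℝ) = ∑ i, (nIP n comp i q : ℝ) := by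
    exact_mod_cast (sum_nIP_eq_mP n comp q).symm
  simp only [alphaR, CountMatrix.sum_crossWeight, CountMatrix.colSum, hn, hm]

lemma Zzero_eq_zMatrix :
    Zzero n comp = CountMatrix.zMatrix (fun i p => (nIP n comp i p : ℝ)) := by
  simp only [Zzero, CountMatrix.zMatrix, alphaR_eq_sum_crossWeight, CountMatrix.colSum,
    ← sum_nIP_eq_mP, Nat.cast_sum]

end Counts

theorem stmt_12_general (s : ℕ) (hs : 2 ≤ s) (n : Fin s → ℕ) (hn : ∀ i, 1 ≤ n i)
    (c : ℕ) (comp : (Σ i, Fin (n i)) → Fin c)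
    (hsurj : Function.Surjective comp) :
    (Zzero n comp).rank = s - 1 := by
  have : Nontrivial (Fin s) := Fin.nontrivial_iff_two_le.mpr hs
  rw [Zzero_eq_zMatrix, CountMatrix.rank_zMatrix, Fintype.card_fin]
  · exact fun i p => Nat.cast_nonneg _
  · exact fun i => ⟨comp ⟨i, ⟨0, hn i⟩⟩, by exact_mod_cast nIP_fst_comp_pos n comp ⟨i, ⟨0, hn i⟩⟩⟩
  · intro p
    obtain ⟨v, rfl⟩ := hsurj p
    exact ⟨v.1, by exact_mod_cast nIP_fst_comp_pos n comp v⟩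

/-- The matrix `Z(0)` has rank exactly `s − 1`. -/
theorem stmt_12 (s : ℕ) (hs : 2 ≤ s) (n : Fin s → ℕ) (hn : ∀ i, 1 ≤ n i)
    (F : SimpleGraph (Σ i, Fin (n i)))
    (hFG : F ≤ SimpleGraph.completeMultipartiteGraph (fun i => Fin (n i)))
    (hF : F.IsAcyclic)
    (c : ℕ) (comp : (Σ i, Fin (n i)) → Fin c)
    (hcomp : ∀ u v, comp u = comp v ↔ F.Reachable u v)
    (hsurj : Function.Surjective comp) :
    (Zzero n comp).rank = s - 1 :=
  stmt_12_general s hs n hn c comp hsurj
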